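/- With the setup of the mixture model U₁₂ = θP₁₂+(1-θ)N₁₂, U₁₂' = θ'P₁₂+(1-θ')N₁₂ (θ≠θ'), the leading quadratic coefficient of m(α) equals a = -(θ-θ')² (E_{P₁}[g₁] - E_{N₁}[g₁]) (E_{P₂}[g₂] - E_{N₂}[g₂]). Consequently, if this product is nonzero and m has a real root, then m(α)=0 has exactly the two real roots of a quadratic with a ≠ 0 (in particular all roots of m are real). -/

import Mathlib

/-!
Integrals against the mixtures are affine in the mixing proportion, so after substituting
`∫ g dU = θ E_P g + (1 - θ) E_N g` the leading coefficient `a` of the quadratic `m` factors as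
`-(θ - θ')² (E_P g₁ - E_N g₁)(E_P g₂ - E_N g₂)`. When it is nonzero, a quadratic with one real
root `α₀` has discriminant `(2 a α₀ + b)²`, and the quadratic formula lists all its roots.
-/

open MeasureTheory

theorem integral_mixture {X : Type*} [MeasurableSpace X] {P N : Measure X} {θ : ℝ}
    (hθ : θ ∈ Set.Icc (0 : ℝ) 1) {f : X → ℝ} (hP : Integrable f P) (hN : Integrable f N) :
    ∫ x, f x ∂(ENNReal.ofReal θ • P + ENNReal.ofReal (1 - θ) • N)
      = θ * ∫ x, f x ∂P + (1 - θ) * ∫ x, f x ∂N := by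
  rw [integral_add_measure (hP.smul_measure ENNReal.ofReal_ne_top)
      (hN.smul_measure ENNReal.ofReal_ne_top),
    integral_smul_measure, integral_smul_measure,
    ENNReal.toReal_ofReal hθ.1, ENNReal.toReal_ofReal (sub_nonneg.mpr hθ.2), smul_eq_mul,
    smul_eq_mul]

theorem affine_cov_eq_quadratic (S S' A A' B B' α : ℝ) :
    (α * S + (1 - α) * S') - (α * A + (1 - α) * A') * (α * B + (1 - α) * B')
      = (A * B' + A' * B - A * B - A' * B') * (α * α)
        + (S - S' - A' * (B - B') - B' * (A - A')) * α + (S' - A' * B') := by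
  ring

theorem exists_roots_of_quadratic_eq_zero {K : Type*} [Field K] [NeZero (2 : K)] {a b c x₀ : K}
    (ha : a ≠ 0) (h : a * (x₀ * x₀) + b * x₀ + c = 0) :
    ∃ r₁ r₂ : K, ∀ x, a * (x * x) + b * x + c = 0 ↔ x = r₁ ∨ x = r₂ :=
  ⟨_, _, quadratic_eq_zero_iff ha (by rw [discrim_eq_sq_of_quadratic_eq_zero h, sq])⟩

theorem stmt3 {X₁ X₂ : Type*} [MeasurableSpace X₁] [MeasurableSpace X₂]
    (P₁₂ N₁₂ U₁₂ U₁₂' : Measure (X₁ × X₂))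
    [IsProbabilityMeasure P₁₂] [IsProbabilityMeasure N₁₂]
    (θ θ' : ℝ) (hθ : θ ∈ Set.Icc (0:ℝ) 1) (hθ' : θ' ∈ Set.Icc (0:ℝ) 1) (hne : θ ≠ θ')
    (hU : U₁₂ = ENNReal.ofReal θ • P₁₂ + ENNReal.ofReal (1 - θ) • N₁₂)
    (hU' : U₁₂' = ENNReal.ofReal θ' • P₁₂ + ENNReal.ofReal (1 - θ') • N₁₂)
    (g₁ : X₁ → ℝ) (g₂ : X₂ → ℝ) (hg₁ : Measurable g₁) (hg₂ : Measurable g₂)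
    (C : ℝ) (hb₁ : ∀ x, |g₁ x| ≤ C) (hb₂ : ∀ x, |g₂ x| ≤ C)
    (m : ℝ → ℝ)
    (hm : ∀ α, m α =
      (α * ∫ x, g₁ x.1 * g₂ x.2 ∂U₁₂ + (1 - α) * ∫ x, g₁ x.1 * g₂ x.2 ∂U₁₂')
      - (α * ∫ x, g₁ x.1 ∂U₁₂ + (1 - α) * ∫ x, g₁ x.1 ∂U₁₂')
        * (α * ∫ x, g₂ x.2 ∂U₁₂ + (1 - α) * ∫ x, g₂ x.2 ∂U₁₂'))
    (a : ℝ)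
    (ha : a = (∫ x, g₁ x.1 ∂U₁₂) * (∫ x, g₂ x.2 ∂U₁₂')
        + (∫ x, g₁ x.1 ∂U₁₂') * (∫ x, g₂ x.2 ∂U₁₂)
        - (∫ x, g₁ x.1 ∂U₁₂) * (∫ x, g₂ x.2 ∂U₁₂)
        - (∫ x, g₁ x.1 ∂U₁₂') * (∫ x, g₂ x.2 ∂U₁₂')) :
    a = -(θ - θ') ^ 2 *
        (((∫ x, g₁ x.1 ∂P₁₂) - ∫ x, g₁ x.1 ∂N₁₂) * ((∫ x, g₂ x.2 ∂P₁₂) - ∫ x, g₂ x.2 ∂N₁₂))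
      ∧
    ((((∫ x, g₁ x.1 ∂P₁₂) - ∫ x, g₁ x.1 ∂N₁₂) * ((∫ x, g₂ x.2 ∂P₁₂) - ∫ x, g₂ x.2 ∂N₁₂)) ≠ 0 →
      (∃ α, m α = 0) →
      ∃ r₁ r₂ : ℝ, ∀ α, m α = 0 ↔ α = r₁ ∨ α = r₂) := by
  have integrable (μ : Measure (X₁ × X₂)) [IsFiniteMeasure μ] {f : X₁ × X₂ → ℝ}
      (hf : Measurable f) (hfC : ∀ x, |f x| ≤ C) : Integrable f μ :=
    .of_bound hf.aestronglyMeasurable C (ae_of_all _ hfC)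
  have mix₁ {t : ℝ} (ht : t ∈ Set.Icc (0 : ℝ) 1) :
      ∫ x, g₁ x.1 ∂(ENNReal.ofReal t • P₁₂ + ENNReal.ofReal (1 - t) • N₁₂)
        = t * ∫ x, g₁ x.1 ∂P₁₂ + (1 - t) * ∫ x, g₁ x.1 ∂N₁₂ :=
    integral_mixture ht (integrable P₁₂ (hg₁.comp measurable_fst) fun x => hb₁ x.1)
      (integrable N₁₂ (hg₁.comp measurable_fst) fun x => hb₁ x.1)
  have mix₂ {t : ℝ} (ht : t ∈ Set.Icc (0 : ℝ) 1) :
      ∫ x, g₂ x.2 ∂(ENNReal.ofReal t • P₁₂ + ENNReal.ofReal (1 - t) • N₁₂)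
        = t * ∫ x, g₂ x.2 ∂P₁₂ + (1 - t) * ∫ x, g₂ x.2 ∂N₁₂ :=
    integral_mixture ht (integrable P₁₂ (hg₂.comp measurable_snd) fun x => hb₂ x.2)
      (integrable N₁₂ (hg₂.comp measurable_snd) fun x => hb₂ x.2)
  have ha_eq : a = -(θ - θ') ^ 2 *
      (((∫ x, g₁ x.1 ∂P₁₂) - ∫ x, g₁ x.1 ∂N₁₂) * ((∫ x, g₂ x.2 ∂P₁₂) - ∫ x, g₂ x.2 ∂N₁₂)) := by
    rw [ha, hU, hU', mix₁ hθ, mix₁ hθ', mix₂ hθ, mix₂ hθ']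
    ring
  refine ⟨ha_eq, fun hprod ⟨α₀, hα₀⟩ => ?_⟩
  have ha0 : a ≠ 0 :=
    ha_eq ▸ mul_ne_zero (neg_ne_zero.mpr (pow_ne_zero _ (sub_ne_zero.mpr hne))) hprod
  simp only [hm, affine_cov_eq_quadratic, ← ha] at hα₀ ⊢
  exact exists_roots_of_quadratic_eq_zero ha0 hα₀
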